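/- arXiv:1904.04709 — 3 statements merged into one kernel-verified Lean document; each statement's English description precedes it below -/
import Mathlib

section
/- Let S be a finite, degree independent set of dominant rational self-maps of projective N-space over the algebraic closure of Q, let ν be a probability measure on S, and let (Φ_S, ν̄) be the space of i.i.d. sequences of elements of S distributed according to ν. Then for every point P ∈ P^N(Q̄)_S, one has limsup_{n→∞} h(γ_n(P))^{1/n} ≤ δ_{S,ν} for ν̄-almost every sequence γ ∈ Φ_S, where δ_{S,ν} = exp( inf_{n≥1} E_n[log deg(γ_n)]/n ) is the dynamical degree of (S, ν). -/
/-!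
Fix a block length `m`. Cutting `γ` into consecutive blocks of length `m`, the height grows by at
most the factor `deg` of the block's composite, up to an additive constant that is uniform because
`S` is finite and the orbit avoids every indeterminacy locus; so `h(γ_{jm}(P))` is at most the
product of the block degrees times a linear factor in `j`. The blocks are i.i.d., so by the strong
law of large numbers the logarithm of that product is almost surely `j · E_m[log deg γ_m] + o(j)`,
which gives `limsup h(γ_n(P))^{1/n} ≤ exp(E_m[log deg γ_m] / m)`; take the infimum over `m`.
-/

open MeasureTheory Filter

/-- `γ_n = θ_n ∘ θ_{n-1} ∘ ⋯ ∘ θ_1` for the sequence `γ = (θ_1, θ_2, …)`,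
`θ_{i+1} = γ i`; by convention `γ_0 = id`. -/
def seqComp {S M : Type*} [Monoid M] (F : S → M) (γ : ℕ → S) : ℕ → M
  | 0 => 1
  | n + 1 => F (γ n) * seqComp F γ n

open ProbabilityTheory Finset Topology

section RealSequences

theorem le_prod_mul_add_of_le_mul_add {y B : ℕ → ℝ} {C : ℝ} (hB : ∀ j, 1 ≤ B j) (hC : 0 ≤ C)
    (h : ∀ j, y (j + 1) ≤ B j * y j + C) (j : ℕ) :
    y j ≤ (∏ i ∈ range j, B i) * (y 0 + j * C) := by
  induction j with
  | zero => simp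
  | succ j ih =>
    have hprod : 1 ≤ (∏ i ∈ range j, B i) * B j :=
      one_le_mul_of_one_le_of_one_le (one_le_prod fun i _ => hB i) (hB j)
    calc y (j + 1) ≤ B j * ((∏ i ∈ range j, B i) * (y 0 + j * C)) + C :=
          (h j).trans (by gcongr; exact zero_le_one.trans (hB j))
      _ ≤ (∏ i ∈ range (j + 1), B i) * (y 0 + j * C) + (∏ i ∈ range (j + 1), B i) * C := by
          rw [prod_range_succ]; nlinarith
      _ = (∏ i ∈ range (j + 1), B i) * (y 0 + ↑(j + 1) * C) := by push_cast; ring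

theorem limsup_rpow_inv_le_of_eventually_le {x : ℕ → ℝ} {K R : ℝ} (hx : ∀ n, 0 ≤ x n)
    (hK : 0 < K) (hR : 0 ≤ R) (h : ∀ᶠ n : ℕ in atTop, x n ≤ K * n * R ^ n) :
    limsup (fun n : ℕ => x n ^ (n : ℝ)⁻¹) atTop ≤ R := by
  have hinv : Tendsto (fun n : ℕ => (n : ℝ)⁻¹) atTop (𝓝 0) :=
    tendsto_inv_atTop_zero.comp tendsto_natCast_atTop_atTop
  have hK_root : Tendsto (fun n : ℕ => K ^ (n : ℝ)⁻¹) atTop (𝓝 1) := by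
    simpa [Function.comp_def] using (Real.continuousAt_const_rpow hK.ne').tendsto.comp hinv
  have hn_root : Tendsto (fun n : ℕ => (n : ℝ) ^ (n : ℝ)⁻¹) atTop (𝓝 1) := by
    simpa only [one_div, Function.comp_def] using tendsto_rpow_div.comp tendsto_natCast_atTop_atTop
  have hlim : Tendsto (fun n : ℕ => K ^ (n : ℝ)⁻¹ * (n : ℝ) ^ (n : ℝ)⁻¹ * R) atTop (𝓝 R) := by
    simpa using (hK_root.mul hn_root).mul_const R
  have hev : ∀ᶠ n : ℕ in atTop, x n ^ (n : ℝ)⁻¹ ≤ K ^ (n : ℝ)⁻¹ * (n : ℝ) ^ (n : ℝ)⁻¹ * R := by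
    filter_upwards [h, eventually_ge_atTop 1] with n hn hn1
    calc x n ^ (n : ℝ)⁻¹ ≤ (K * n * R ^ n) ^ (n : ℝ)⁻¹ := by gcongr; exact hx n
      _ = K ^ (n : ℝ)⁻¹ * (n : ℝ) ^ (n : ℝ)⁻¹ * R := by
        rw [Real.mul_rpow (by positivity) (by positivity), Real.mul_rpow hK.le (by positivity),
          Real.pow_rpow_inv_natCast hR (by omega)]
  have hcobdd : IsCoboundedUnder (· ≤ ·) atTop fun n : ℕ => x n ^ (n : ℝ)⁻¹ :=
    isCoboundedUnder_le_of_le atTop fun n => Real.rpow_nonneg (hx n) _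
  exact (limsup_le_limsup hev hcobdd hlim.isBoundedUnder_le).trans_eq hlim.limsup_eq

theorem eventually_prod_le_pow_of_tendsto {B : ℕ → ℝ} {a ρ : ℝ} (hB : ∀ j, 0 < B j)
    (hρ : 0 < ρ) (ha : a < Real.log ρ)
    (hlim : Tendsto (fun j : ℕ => (∑ i ∈ range j, Real.log (B i)) / j) atTop (𝓝 a)) :
    ∀ᶠ j : ℕ in atTop, ∏ i ∈ range j, B i ≤ ρ ^ j := by
  filter_upwards [hlim.eventually_lt_const ha, eventually_gt_atTop 0] with j hj hj0
  have hsum : ∑ i ∈ range j, Real.log (B i) ≤ Real.log (ρ ^ j) := by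
    rw [Real.log_pow]
    exact ((div_lt_iff₀ (by positivity)).1 hj).le.trans_eq (mul_comm _ _)
  calc ∏ i ∈ range j, B i = Real.exp (∑ i ∈ range j, Real.log (B i)) := by
        rw [Real.exp_sum]; exact prod_congr rfl fun i _ => (Real.exp_log (hB i)).symm
    _ ≤ ρ ^ j := (Real.exp_le_exp.2 hsum).trans_eq (Real.exp_log (by positivity))

variable {x B : ℕ → ℝ} {D C : ℝ} {m : ℕ}

theorem le_of_block_growth (hx : ∀ n, 0 ≤ x n) (hD : 1 ≤ D) (hC : 0 ≤ C) (hB : ∀ j, 1 ≤ B j)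
    (hstep : ∀ n, x (n + 1) ≤ D * x n + C) (hblock : ∀ j, x (j * m + m) ≤ B j * x (j * m) + C)
    (j : ℕ) {r : ℕ} (hr : r ≤ m) :
    x (j * m + r) ≤ D ^ m * ((∏ i ∈ range j, B i) * (x 0 + j * C) + m * C) := by
  have hrun : x (j * m + r) ≤ D ^ r * (x (j * m) + r * C) := by
    simpa using le_prod_mul_add_of_le_mul_add (y := fun r => x (j * m + r)) (fun _ => hD) hC
      (fun r => hstep (j * m + r)) r
  have hblocks : x (j * m) ≤ (∏ i ∈ range j, B i) * (x 0 + j * C) := by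
    simpa using le_prod_mul_add_of_le_mul_add (y := fun j => x (j * m)) hB hC
      (fun j => by simpa only [add_mul, one_mul] using hblock j) j
  have hrm : (r : ℝ) ≤ m := by exact_mod_cast hr
  refine hrun.trans ?_
  gcongr D ^ ?_ * (?_ + ?_)
  · exact add_nonneg (hx _) (by positivity)
  · gcongr

theorem limsup_rpow_inv_le_exp_of_block_growth {a : ℝ} (hm : 0 < m)
    (hx : ∀ n, 0 ≤ x n) (hD : 1 ≤ D) (hC : 0 ≤ C) (hB : ∀ j, 1 ≤ B j)
    (hstep : ∀ n, x (n + 1) ≤ D * x n + C)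
    (hblock : ∀ j, x (j * m + m) ≤ B j * x (j * m) + C)
    (hlim : Tendsto (fun j : ℕ => (∑ i ∈ range j, Real.log (B i)) / j) atTop (𝓝 a)) :
    limsup (fun n : ℕ => x n ^ (n : ℝ)⁻¹) atTop ≤ Real.exp (a / m) := by
  have ha : 0 ≤ a := ge_of_tendsto' hlim fun j =>
    div_nonneg (sum_nonneg fun i _ => Real.log_nonneg (hB i)) j.cast_nonneg
  -- For `R > exp (a / m)` the block degrees eventually multiply to at most `R ^ (j * m)`.
  refine le_of_forall_gt_imp_ge_of_dense fun R hR => ?_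
  have hR1 : 1 ≤ R := (Real.one_le_exp (by positivity)).trans hR.le
  have hlogR : a < Real.log (R ^ m) := by
    rw [Real.log_pow, ← div_lt_iff₀' (by positivity)]
    exact (Real.lt_log_iff_exp_lt (by positivity)).2 hR
  obtain ⟨J, hJ⟩ := eventually_atTop.1 (eventually_prod_le_pow_of_tendsto
    (fun j => zero_lt_one.trans_le (hB j)) (by positivity) hlogR hlim)
  have hx0 := hx 0
  refine limsup_rpow_inv_le_of_eventually_le hx (K := D ^ m * (x 0 + (m + 1) * C + 1))
    (by positivity) (by positivity) ?_
  filter_upwards [eventually_ge_atTop (J * m), eventually_ge_atTop 1] with n hn hn1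
  set j := n / m
  have hprod : ∏ i ∈ range j, B i ≤ R ^ (j * m) := by
    simpa only [← pow_mul, mul_comm m] using hJ j ((Nat.le_div_iff_mul_le hm).2 hn)
  have hjn : (j : ℝ) ≤ n := by exact_mod_cast Nat.div_le_self n m
  have hRn : R ^ (j * m) ≤ R ^ n := pow_le_pow_right₀ hR1 (Nat.div_mul_le_self n m)
  have hR1n : 1 ≤ R ^ n := one_le_pow₀ hR1
  have hn1' : (1 : ℝ) ≤ n := by exact_mod_cast hn1
  calc x n = x (j * m + n % m) := by rw [Nat.div_add_mod']
    _ ≤ D ^ m * ((∏ i ∈ range j, B i) * (x 0 + j * C) + m * C) :=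
        le_of_block_growth hx hD hC hB hstep hblock j (Nat.mod_lt n hm).le
    _ ≤ D ^ m * (R ^ n * (x 0 + n * C) + R ^ n * (m * C)) := by
        gcongr ?_ * (?_ + ?_)
        · calc (∏ i ∈ range j, B i) * (x 0 + j * C) ≤ R ^ (j * m) * (x 0 + j * C) := by gcongr
            _ ≤ R ^ n * (x 0 + n * C) := by gcongr
        · exact le_mul_of_one_le_left (by positivity) hR1n
    _ ≤ D ^ m * (R ^ n * ((x 0 + (m + 1) * C + 1) * n)) := by
        rw [← mul_add]
        gcongr
        nlinarith [mul_nonneg (Nat.cast_nonneg (α := ℝ) m) hC]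
    _ = D ^ m * (x 0 + (m + 1) * C + 1) * n * R ^ n := by ring

end RealSequences

section Blocks

variable {S : Type*}

def seqBlock (m i : ℕ) (γ : ℕ → S) : Fin m → S := fun l => γ (i * m + l)

theorem seqBlock_zero (m : ℕ) (γ : ℕ → S) : seqBlock m 0 γ = fun l : Fin m => γ l := by
  funext l
  simp [seqBlock]

theorem injective_mul_add_fin (m : ℕ) : Function.Injective fun p : ℕ × Fin m => p.1 * m + p.2 := by
  rcases Nat.eq_zero_or_pos m with rfl | hm
  · exact fun p => p.2.elim0
  · have := NeZero.of_pos hm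
    exact (Nat.divModEquiv m).symm.injective

variable [MeasurableSpace S]

theorem eq_infinitePi_of_cylinder (ν : Measure S) [IsProbabilityMeasure ν]
    (μ : Measure (ℕ → S))
    (hiid : ∀ (n : ℕ) (A : Fin n → Set S), μ {γ | ∀ i : Fin n, γ i ∈ A i} = ∏ i, ν (A i)) :
    μ = Measure.infinitePi fun _ => ν := by
  classical
  refine Measure.eq_infinitePi _ fun s t _ => ?_
  obtain ⟨n, hsn⟩ : ∃ n, s ⊆ range n := ⟨s.sup id + 1, fun i hi =>
    mem_range.2 (Nat.lt_succ_of_le (le_sup (f := id) hi))⟩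
  have hpi : (s : Set ℕ).pi t = {γ | ∀ i : Fin n, γ i ∈ if (i : ℕ) ∈ s then t i else Set.univ} := by
    ext γ
    simp only [Set.mem_pi, mem_coe, Set.mem_ofPred_eq]
    refine ⟨fun h i => ?_, fun h i hi => by simpa [hi] using h ⟨i, mem_range.1 (hsn hi)⟩⟩
    split_ifs with hi
    · exact h i hi
    · trivial
  rw [hpi, hiid, Fin.prod_univ_eq_prod_range (fun i => ν (if i ∈ s then t i else Set.univ)),
    ← prod_subset hsn fun i _ hi => by simp [hi]]
  exact prod_congr rfl fun i hi => by simp [hi]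

variable (ν : Measure S) [IsProbabilityMeasure ν]

theorem map_seqBlock_infinitePi (m i : ℕ) :
    (Measure.infinitePi fun _ : ℕ => ν).map (seqBlock m i) = Measure.pi fun _ : Fin m => ν := by
  rw [← Measure.infinitePi_eq_pi]
  exact Measure.map_infinitePi_infinitePi_of_inj (f := fun l : Fin m => i * m + l)
    fun a b hab => Fin.ext (by simpa using hab)

theorem measurable_seqBlock (m i : ℕ) : Measurable (seqBlock (S := S) m i) := by
  unfold seqBlock; fun_prop

theorem iIndepFun_seqBlock_infinitePi (m : ℕ) :
    iIndepFun (fun i => seqBlock m i) (Measure.infinitePi fun _ : ℕ => ν) := by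
  rw [iIndepFun_iff_map_fun_eq_infinitePi_map (measurable_seqBlock m)]
  simp_rw [map_seqBlock_infinitePi, ← Measure.infinitePi_eq_pi]
  have hcomp : (fun γ i => seqBlock m i γ) =
      MeasurableEquiv.curry ℕ (Fin m) S ∘ fun γ (p : ℕ × Fin m) => γ (p.1 * m + p.2) := by
    rfl
  rw [hcomp, ← Measure.map_map (by fun_prop) (by fun_prop),
    Measure.map_infinitePi_infinitePi_of_inj (injective_mul_add_fin m),
    Measure.infinitePi_map_curry (fun _ _ => ν)]

theorem ae_tendsto_avg_seqBlock (m : ℕ) {g : (Fin m → S) → ℝ} (hg : Measurable g)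
    (hg_int : Integrable g (Measure.pi fun _ => ν)) :
    ∀ᵐ γ ∂(Measure.infinitePi fun _ : ℕ => ν),
      Tendsto (fun j : ℕ => (∑ i ∈ range j, g (seqBlock m i γ)) / j) atTop
        (𝓝 (∫ γ, g (seqBlock m 0 γ) ∂(Measure.infinitePi fun _ : ℕ => ν))) := by
  have hident : ∀ i, IdentDistrib (seqBlock m i) (seqBlock m 0) (Measure.infinitePi fun _ : ℕ => ν)
      (Measure.infinitePi fun _ : ℕ => ν) := fun i =>
    ⟨(measurable_seqBlock m i).aemeasurable, (measurable_seqBlock m 0).aemeasurable,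
      by rw [map_seqBlock_infinitePi, map_seqBlock_infinitePi]⟩
  refine strong_law_ae_real (fun i γ => g (seqBlock m i γ)) ?_
    (fun i j hij => ((iIndepFun_seqBlock_infinitePi ν m).comp _ fun _ => hg).indepFun hij)
    fun i => (hident i).comp hg
  rw [← map_seqBlock_infinitePi ν m 0] at hg_int
  exact hg_int.comp_measurable (measurable_seqBlock m 0)

end Blocks

section Dynamics

variable {S M Pt : Type*} [Monoid M] [MulAction M Pt] (F : S → M)

def tupleComp : {m : ℕ} → (Fin m → S) → M
  | 0, _ => 1
  | m + 1, v => F (v (Fin.last m)) * tupleComp (Fin.init v)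

theorem seqComp_add (γ : ℕ → S) (n r : ℕ) :
    seqComp F γ (n + r) = tupleComp F (fun l : Fin r => γ (n + l)) * seqComp F γ n := by
  induction r with
  | zero => simp [tupleComp]
  | succ r ih =>
    change F (γ (n + r)) * seqComp F γ (n + r) = _
    rw [ih, ← mul_assoc]
    rfl

theorem seqComp_eq_tupleComp (γ : ℕ → S) (m : ℕ) :
    seqComp F γ m = tupleComp F (fun l : Fin m => γ l) := by
  simpa [seqComp] using seqComp_add F γ 0 m

variable {F} {indet : M → Set Pt} {γ : ℕ → S} {P : Pt}

theorem seqComp_smul_notMem_indet_tupleComp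
    (hindet_comp : ∀ f g : M, indet (f * g) ⊆ indet g ∪ {Q | g • Q ∈ indet f})
    (hP : ∀ n s, seqComp F γ n • P ∉ indet (F s)) (n k : ℕ) :
    seqComp F γ n • P ∉ indet (tupleComp F fun l : Fin (k + 1) => γ (n + l)) := by
  induction k with
  | zero => simpa [tupleComp] using hP n (γ n)
  | succ k ih =>
    intro hmem
    rcases hindet_comp _ _ hmem with hmem | hmem
    · exact ih hmem
    · have h := hP (n + (k + 1)) (γ (n + (k + 1)))
      rw [seqComp_add, mul_smul] at h
      exact h hmem

theorem exists_height_seqComp_add_le [Finite S] {deg : M → ℕ} {h : Pt → ℝ}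
    (hheight_bound : ∀ f : M, ∃ C : ℝ, ∀ Q : Pt, Q ∉ indet f → h (f • Q) ≤ (deg f : ℝ) * h Q + C)
    (hindet_comp : ∀ f g : M, indet (f * g) ⊆ indet g ∪ {Q | g • Q ∈ indet f})
    (hP : ∀ n s, seqComp F γ n • P ∉ indet (F s)) (k : ℕ) :
    ∃ C, 0 ≤ C ∧ ∀ n, h (seqComp F γ (n + (k + 1)) • P) ≤
      deg (tupleComp F fun l : Fin (k + 1) => γ (n + l)) * h (seqComp F γ n • P) + C := by
  choose C hC using hheight_bound
  refine ⟨max 0 (⨆ v : Fin (k + 1) → S, C (tupleComp F v)), le_max_left _ _, fun n => ?_⟩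
  rw [seqComp_add, mul_smul]
  refine (hC _ _ (seqComp_smul_notMem_indet_tupleComp hindet_comp hP n k)).trans ?_
  gcongr
  exact le_max_of_le_right
    (le_ciSup (f := fun v => C (tupleComp F v)) (Set.finite_range _).bddAbove _)

theorem limsup_height_rpow_inv_le [Finite S] {deg : M → ℕ} {h : Pt → ℝ}
    (hdominant : ∀ f : M, 1 ≤ deg f) (hheight_nonneg : ∀ Q : Pt, 0 ≤ h Q)
    (hheight_bound : ∀ f : M, ∃ C : ℝ, ∀ Q : Pt, Q ∉ indet f → h (f • Q) ≤ (deg f : ℝ) * h Q + C)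
    (hindet_comp : ∀ f g : M, indet (f * g) ⊆ indet g ∪ {Q | g • Q ∈ indet f})
    (hP : ∀ n s, seqComp F γ n • P ∉ indet (F s)) {m : ℕ} (hm : 0 < m) {a : ℝ}
    (hlim : Tendsto
      (fun j : ℕ => (∑ i ∈ range j, Real.log (deg (tupleComp F (seqBlock m i γ)))) / j)
      atTop (𝓝 a)) :
    limsup (fun n : ℕ => h (seqComp F γ n • P) ^ (n : ℝ)⁻¹) atTop ≤ Real.exp (a / m) := by
  obtain ⟨k, rfl⟩ : ∃ k, m = k + 1 := ⟨m - 1, by omega⟩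
  obtain ⟨C₁, hC₁, hstep⟩ := exists_height_seqComp_add_le hheight_bound hindet_comp hP 0
  obtain ⟨C, -, hblock⟩ := exists_height_seqComp_add_le hheight_bound hindet_comp hP k
  refine limsup_rpow_inv_le_exp_of_block_growth (C := max C₁ C)
    (D := max 1 (⨆ v : Fin 1 → S, (deg (tupleComp F v) : ℝ))) k.succ_pos
    (fun n => hheight_nonneg _) (le_max_left _ _) (le_max_of_le_left hC₁)
    (fun j => by exact_mod_cast hdominant _) (fun n => (hstep n).trans ?_)
    (fun j => (hblock (j * (k + 1))).trans ?_) hlim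
  · gcongr
    · exact hheight_nonneg _
    · exact le_max_of_le_right (le_ciSup (f := fun v => (deg (tupleComp F v) : ℝ))
        (Set.finite_range _).bddAbove _)
    · exact le_max_left C₁ C
  · exact add_le_add le_rfl (le_max_right C₁ C)

end Dynamics

theorem height_growth_bounded_by_dynamical_degree_general
    {S Pt M : Type*} [Monoid M] [MulAction M Pt] [Fintype S]
    [MeasurableSpace S] [DiscreteMeasurableSpace S]
    -- the finite set `S` of dominant rational self-maps of `ℙ^N(ℚ̄)`:
    (F : S → M) (deg : M → ℕ) (indet : M → Set Pt) (h : Pt → ℝ)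
    (hdominant : ∀ f : M, 1 ≤ deg f)
    (hheight_nonneg : ∀ Q : Pt, 0 ≤ h Q)
    (hheight_bound : ∀ f : M, ∃ C : ℝ, ∀ Q : Pt, Q ∉ indet f →
      h (f • Q) ≤ (deg f : ℝ) * h Q + C)
    (hindet_comp : ∀ f g : M, indet (f * g) ⊆ indet g ∪ {Q | g • Q ∈ indet f})
    -- `ν` is a probability measure on `S`:
    (ν : Measure S) [IsProbabilityMeasure ν]
    -- `μ = ν̄` is the i.i.d. product measure on `Φ_S = ∏_{i=1}^∞ S`:
    (μ : Measure (ℕ → S))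
    (hiid : ∀ (n : ℕ) (A : Fin n → Set S),
      μ {γ | ∀ i : Fin n, γ i ∈ A i} = ∏ i, ν (A i))
    -- `P ∈ ℙ^N(ℚ̄)_S`: every orbit of `P` avoids `I_S = ⋃_{φ ∈ S} I_φ`:
    (P : Pt)
    (hP : ∀ (γ : ℕ → S) (n : ℕ) (s : S), seqComp F γ n • P ∉ indet (F s)) :
    -- a.e. `limsup_n h(γ_n(P))^{1/n} ≤ δ_{S,ν} = exp(inf_{n≥1} E_n[log deg γ_n]/n)`:
    ∀ᵐ γ ∂μ,
      limsup (fun n : ℕ => h (seqComp F γ n • P) ^ ((n : ℝ)⁻¹)) atTop ≤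
        Real.exp (⨅ n : {n : ℕ // 1 ≤ n},
          (∫ γ', Real.log (deg (seqComp F γ' (n : ℕ))) ∂μ) / ((n : ℕ) : ℝ)) := by
  have hlaw : ∀ᵐ γ ∂μ, ∀ m : ℕ, Tendsto
      (fun j : ℕ => (∑ i ∈ range j, Real.log (deg (tupleComp F (seqBlock m i γ)))) / j) atTop
      (𝓝 (∫ γ', Real.log (deg (seqComp F γ' m)) ∂μ)) := by
    rw [eq_infinitePi_of_cylinder ν μ hiid, ae_all_iff]
    intro m
    simpa only [seqComp_eq_tupleComp, seqBlock_zero] using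
      ae_tendsto_avg_seqBlock ν m (g := fun v => Real.log (deg (tupleComp F v)))
        (measurable_of_finite _) (Integrable.of_finite)
  filter_upwards [hlaw] with γ hγ
  have : Nonempty {n : ℕ // 1 ≤ n} := ⟨⟨1, le_rfl⟩⟩
  have hbdd : BddBelow (Set.range fun n : {n : ℕ // 1 ≤ n} =>
      (∫ γ', Real.log (deg (seqComp F γ' (n : ℕ))) ∂μ) / ((n : ℕ) : ℝ)) := by
    refine ⟨0, ?_⟩
    rintro _ ⟨n, rfl⟩
    exact div_nonneg (integral_nonneg fun γ' => Real.log_nonneg (by exact_mod_cast hdominant _))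
      n.1.cast_nonneg
  rw [Monotone.map_ciInf_of_continuousAt Real.continuous_exp.continuousAt Real.exp_monotone hbdd]
  exact le_ciInf fun n => limsup_height_rpow_inv_le hdominant hheight_nonneg hheight_bound
    hindet_comp (hP γ) n.2 (hγ n)

theorem height_growth_bounded_by_dynamical_degree
    {S Pt M : Type*} [Monoid M] [MulAction M Pt] [Fintype S]
    [MeasurableSpace S] [DiscreteMeasurableSpace S]
    -- the finite set `S` of dominant rational self-maps of `ℙ^N(ℚ̄)`:
    (F : S → M) (deg : M → ℕ) (indet : M → Set Pt) (h : Pt → ℝ)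
    (hdominant : ∀ f : M, 1 ≤ deg f)
    (hdeg_id : deg 1 = 1)
    (hdeg_comp : ∀ f g : M, deg (f * g) ≤ deg f * deg g)
    (hheight_nonneg : ∀ Q : Pt, 0 ≤ h Q)
    (hheight_bound : ∀ f : M, ∃ C : ℝ, ∀ Q : Pt, Q ∉ indet f →
      h (f • Q) ≤ (deg f : ℝ) * h Q + C)
    (hindet_comp : ∀ f g : M, indet (f * g) ⊆ indet g ∪ {Q | g • Q ∈ indet f})
    -- `S` is degree independent:
    (hdegind : ∀ (γ : ℕ → S) (n : ℕ), 1 ≤ n → 2 ≤ deg (seqComp F γ n))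
    -- `ν` is a probability measure on `S`:
    (ν : Measure S) [IsProbabilityMeasure ν]
    -- `μ = ν̄` is the i.i.d. product measure on `Φ_S = ∏_{i=1}^∞ S`:
    (μ : Measure (ℕ → S)) [IsProbabilityMeasure μ]
    (hiid : ∀ (n : ℕ) (A : Fin n → Set S),
      μ {γ | ∀ i : Fin n, γ i ∈ A i} = ∏ i, ν (A i))
    -- `P ∈ ℙ^N(ℚ̄)_S`: every orbit of `P` avoids `I_S = ⋃_{φ ∈ S} I_φ`:
    (P : Pt)
    (hP : ∀ (γ : ℕ → S) (n : ℕ) (s : S), seqComp F γ n • P ∉ indet (F s)) :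
    -- a.e. `limsup_n h(γ_n(P))^{1/n} ≤ δ_{S,ν} = exp(inf_{n≥1} E_n[log deg γ_n]/n)`:
    ∀ᵐ γ ∂μ,
      limsup (fun n : ℕ => h (seqComp F γ n • P) ^ ((n : ℝ)⁻¹)) atTop ≤
        Real.exp (⨅ n : {n : ℕ // 1 ≤ n},
          (∫ γ', Real.log (deg (seqComp F γ' (n : ℕ))) ∂μ) / ((n : ℕ) : ℝ)) :=
  height_growth_bounded_by_dynamical_degree_general F deg indet h hdominant hheight_nonneg
    hheight_bound hindet_comp ν μ hiid P hP
end

section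
/- (Escape Lemma) Let X be a set, let S be any collection of self-maps of X, and let M_S be the monoid of self-maps of X generated by S together with the identity map. Suppose F = {Q_1, Q_2, ..., Q_n} is a finite subset of X such that (1) φ(X ∖ F) ⊆ X ∖ F for every φ ∈ S, and (2) for each Q_i ∈ F there exists f_i ∈ M_S with f_i(Q_i) ∉ F. Then there exists a single g ∈ M_S such that g(Q_i) ∉ F for all Q_i ∈ F. -/
/-!
Points of `F` are pushed out one at a time. Once a point has left `F` it can never come back,
because every element of `M_S` maps the complement of `F` into itself. So if `g` already moves
finitely many points out of `F` and `g Q` is still in `F`, composing `g` with an escape map for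
`g Q` moves `Q` out as well without bringing any earlier point back.
-/

namespace Function.End

variable {X : Type*}

def mapsToSubmonoid (s : Set X) : Submonoid (Function.End X) where
  carrier := {f | Set.MapsTo f s s}
  mul_mem' hf hg := Set.MapsTo.comp hf hg
  one_mem' := Set.mapsTo_id s

theorem exists_mem_mapsTo_compl {M : Submonoid (Function.End X)} {F : Set X}
    (hM : M ≤ mapsToSubmonoid Fᶜ) (hesc : ∀ Q ∈ F, ∃ f ∈ M, f Q ∉ F)
    {A : Set X} (hA : A.Finite) : ∃ g ∈ M, Set.MapsTo g A Fᶜ := by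
  induction A, hA using Set.Finite.induction_on with
  | empty => exact ⟨1, M.one_mem, Set.mapsTo_empty _ _⟩
  | @insert a A _ _ ih =>
    obtain ⟨g, hgM, hgA⟩ := ih
    by_cases hga : g a ∈ F
    · obtain ⟨f, hfM, hfga⟩ := hesc (g a) hga
      refine ⟨f * g, M.mul_mem hfM hgM, Set.forall_mem_insert.mpr ⟨hfga, ?_⟩⟩
      exact Set.MapsTo.comp (hM hfM) hgA
    · exact ⟨g, hgM, Set.forall_mem_insert.mpr ⟨hga, hgA⟩⟩

end Function.End

theorem escape_lemma {X : Type*} (S : Set (Function.End X))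
    (F : Set X) (hF : F.Finite)
    -- (1) the complement of `F` is stable under every map in `S`:
    (h1 : ∀ φ ∈ S, ∀ x : X, x ∉ F → φ x ∉ F)
    -- (2) each point of `F` can be moved out of `F` by some element of `M_S`:
    (h2 : ∀ Q ∈ F, ∃ f ∈ Submonoid.closure S, f Q ∉ F) :
    -- there is a single escape function `g ∈ M_S` for `F`:
    ∃ g ∈ Submonoid.closure S, ∀ Q ∈ F, g Q ∉ F :=
  Function.End.exists_mem_mapsTo_compl (Submonoid.closure_le.mpr h1) h2 hF
end

section
/- Let S be a finite set of endomorphisms of projective N-space over the algebraic closure of Q, all of degree at least 2, set C_S := max( max_{φ∈S} C(φ), 1 ), and for P ∈ P^N(Q̄) let F_{P,S} := { Q ∈ Orb_S(P) : h(Q) ≤ 2 C_S }. If γ is an infinite sequence of elements of S with canonical height ĥ_γ(P) = 0, then the entire orbit Orb_γ(P) is contained in F_{P,S}. -/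
/-!
Statement 11 (Lemma `hatzero`): if the canonical height `ĥ_γ(P)` vanishes, then
the orbit `Orb_γ(P)` is contained in the bounded-height part `F_{P,S}` of the
total orbit `Orb_S(P)`.

Abstract model: `Pt` is `ℙ^N(ℚ̄)`, `M` the monoid of endomorphisms acting on
`Pt`, `deg : M → ℕ` the (multiplicative) degree, `h : Pt → ℝ` the absolute Weil
height (nonnegative).  The finite set `S` of endomorphisms of degree ≥ 2 is
given by `F : S → M`.  For `φ ∈ S`, `C(φ) = sup_Q |h(φ(Q)) − deg φ · h(Q)|`
(finite by functoriality of heights, hypothesis `hBdd`), and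
`C_S = max(max_{φ∈S} C(φ), 1)`; `Orb_S(P) = {ρ(P) : ρ ∈ M_S}` with `M_S` the
monoid generated by `S`, and `F_{P,S} = {Q ∈ Orb_S(P) : h(Q) ≤ 2 C_S}`.

For `γ = (θ_1, θ_2, …)`, `γ_n = θ_n ∘ ⋯ ∘ θ_1`; the hypothesis `ĥ_γ(P) = 0`
says that the limit `lim_n h(γ_n(P))/deg(γ_n)` (which exists, `S` being height
controlled) is `0`; the conclusion is `Orb_γ(P) = {γ_n(P) : n ≥ 0} ⊆ F_{P,S}`.
-/

open MeasureTheory Filter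

/-- `Orb_S(P) = {ρ(P) : ρ ∈ M_S}`, where `M_S = Submonoid.closure (range F)` is
the monoid of all finite compositions of elements of `S` together with the
identity. -/
def monOrbit {S Pt M : Type*} [Monoid M] [MulAction M Pt]
    (F : S → M) (P : Pt) : Set Pt :=
  (fun m : M => m • P) '' (Submonoid.closure (Set.range F) : Set M)

/-- `C(φ) = sup_{Q ∈ ℙ^N(ℚ̄)} |h(φ(Q)) − deg(φ)·h(Q)|`. -/
noncomputable def heightDefect {Pt M : Type*} [Monoid M] [MulAction M Pt]
    (deg : M → ℕ) (h : Pt → ℝ) (f : M) : ℝ :=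
  ⨆ Q : Pt, |h (f • Q) - (deg f : ℝ) * h Q|

/-- `C_S = max(max_{φ ∈ S} C(φ), 1)`. -/
noncomputable def heightConst {S Pt M : Type*} [Monoid M] [MulAction M Pt]
    (F : S → M) (deg : M → ℕ) (h : Pt → ℝ) : ℝ :=
  max (⨆ s : S, heightDefect deg h (F s)) 1

theorem orbit_of_canonical_height_zero_is_bounded
    {S Pt M : Type*} [Monoid M] [MulAction M Pt] [Fintype S]
    -- the finite set `S` of endomorphisms of `ℙ^N(ℚ̄)`, all of degree ≥ 2:
    (F : S → M) (deg : M → ℕ) (h : Pt → ℝ)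
    (hdeg_id : deg 1 = 1)
    (hdeg_comp : ∀ f g : M, deg (f * g) = deg f * deg g)
    (hdeg2 : ∀ s : S, 2 ≤ deg (F s))
    (hheight_nonneg : ∀ Q : Pt, 0 ≤ h Q)
    -- each `C(φ)` is finite (functoriality of the Weil height):
    (hBdd : ∀ s : S,
      BddAbove (Set.range fun Q : Pt => |h (F s • Q) - (deg (F s) : ℝ) * h Q|))
    (P : Pt) (γ : ℕ → S)
    -- `ĥ_γ(P) = lim_n h(γ_n(P))/deg(γ_n) = 0`:
    (hcanzero : Tendsto
      (fun n : ℕ => h (seqComp F γ n • P) / (deg (seqComp F γ n) : ℝ))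
      atTop (nhds 0)) :
    -- `Orb_γ(P) ⊆ F_{P,S}`:
    ∀ n : ℕ, seqComp F γ n • P ∈
      {Q ∈ monOrbit F P | h Q ≤ 2 * heightConst F deg h} := by
  intro n
  set C := heightConst F deg h with hCdef
  have hC1 : (1 : ℝ) ≤ C := le_max_right _ _
  -- membership in the monoid orbit
  have hmem : ∀ m : ℕ, seqComp F γ m ∈ Submonoid.closure (Set.range F) := by
    intro m
    induction m with
    | zero => exact one_mem _
    | succ k ih =>
      exact mul_mem (Submonoid.subset_closure ⟨γ k, rfl⟩) ih
  refine ⟨⟨seqComp F γ n, hmem n, rfl⟩, ?_⟩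
  -- the defect bound
  have hdefect : ∀ (s : S) (Q : Pt), |h (F s • Q) - (deg (F s) : ℝ) * h Q| ≤ C := by
    intro s Q
    have h1 : |h (F s • Q) - (deg (F s) : ℝ) * h Q| ≤ heightDefect deg h (F s) :=
      le_ciSup (hBdd s) Q
    have h2 : heightDefect deg h (F s) ≤ ⨆ s : S, heightDefect deg h (F s) :=
      le_ciSup (f := fun s : S => heightDefect deg h (F s))
        (Set.Finite.bddAbove (Set.finite_range _)) s
    exact h1.trans (h2.trans (le_max_left _ _))
  -- degrees are positive
  have hdpos : ∀ m : ℕ, 0 < deg (seqComp F γ m) := by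
    intro m
    induction m with
    | zero => simp [seqComp, hdeg_id]
    | succ k ih =>
      have := hdeg2 (γ k)
      have : deg (seqComp F γ (k + 1)) = deg (F (γ k)) * deg (seqComp F γ k) :=
        hdeg_comp _ _
      rw [this]
      positivity
  by_contra hbig
  push_neg at hbig
  set a0 : ℝ := h (seqComp F γ n • P) with ha0
  set d0 : ℝ := (deg (seqComp F γ n) : ℝ) with hd0
  have hd0pos : 0 < d0 := by rw [hd0]; exact_mod_cast hdpos n
  have hCpos : 0 < C := lt_of_lt_of_le one_pos hC1
  -- key growth estimate along the tail
  have key : ∀ k : ℕ, d0 * h (seqComp F γ (n + k) • P) ≥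
      (deg (seqComp F γ (n + k)) : ℝ) * (a0 - C) + d0 * C := by
    intro k
    induction k with
    | zero => simp [← ha0, ← hd0]; ring_nf; nlinarith
    | succ k ih =>
      have hstep : seqComp F γ (n + k + 1) = F (γ (n + k)) * seqComp F γ (n + k) := rfl
      set e : ℝ := (deg (F (γ (n + k))) : ℝ) with he
      have he2 : (2 : ℝ) ≤ e := by rw [he]; exact_mod_cast hdeg2 (γ (n + k))
      have hdk : (deg (seqComp F γ (n + k + 1)) : ℝ) =
          e * (deg (seqComp F γ (n + k)) : ℝ) := by
        rw [hstep, hdeg_comp]; push_cast; ring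
      have hlow : h (seqComp F γ (n + k + 1) • P) ≥
          e * h (seqComp F γ (n + k) • P) - C := by
        have := hdefect (γ (n + k)) (seqComp F γ (n + k) • P)
        rw [abs_le] at this
        have := this.1
        rw [hstep, mul_smul]
        linarith
      have hdknn : (0 : ℝ) ≤ (deg (seqComp F γ (n + k)) : ℝ) := by positivity
      show d0 * h (seqComp F γ (n + k + 1) • P) ≥
          (deg (seqComp F γ (n + k + 1)) : ℝ) * (a0 - C) + d0 * C
      rw [hdk]
      have s1 : d0 * (e * h (seqComp F γ (n + k) • P) - C) ≤
          d0 * h (seqComp F γ (n + k + 1) • P) :=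
        mul_le_mul_of_nonneg_left hlow hd0pos.le
      have s2 : e * ((deg (seqComp F γ (n + k)) : ℝ) * (a0 - C) + d0 * C) ≤
          e * (d0 * h (seqComp F γ (n + k) • P)) :=
        mul_le_mul_of_nonneg_left ih (by linarith)
      nlinarith [mul_nonneg (by linarith : (0:ℝ) ≤ e - 2)
        (by positivity : (0:ℝ) ≤ d0 * C)]
  -- hence the normalized heights along the tail are bounded below by ε
  set ε : ℝ := (a0 - C) / d0 with hε
  have hεpos : 0 < ε := by
    apply div_pos _ hd0pos
    nlinarith
  have hlower : ∀ k : ℕ,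
      ε ≤ h (seqComp F γ (k + n) • P) / (deg (seqComp F γ (k + n)) : ℝ) := by
    intro k
    have hk := key k
    rw [add_comm n k] at hk
    have hdkpos : (0 : ℝ) < (deg (seqComp F γ (k + n)) : ℝ) := by
      exact_mod_cast hdpos (k + n)
    rw [hε, div_le_div_iff₀ hd0pos hdkpos]
    nlinarith
  have htail : Tendsto
      (fun k : ℕ => h (seqComp F γ (k + n) • P) / (deg (seqComp F γ (k + n)) : ℝ))
      atTop (nhds 0) := hcanzero.comp (tendsto_add_atTop_nat n)
  have : ε ≤ 0 := ge_of_tendsto' htail hlower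
  linarith
end
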